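/- arXiv:1309.7719 — 2 statements merged into one kernel-verified Lean document; each statement's English description precedes it below -/
import Mathlib

section
/- Fix n ≥ 0. Let E_n = {1,2,3,4} ∪ X ∪ Y ∪ Z where X = {x₀,…,xₙ}, Y = {y₀,…,yₙ}, Z = {z₀,…,zₙ} are pairwise disjoint sets of size n+1 disjoint from {1,2,3,4}. Define H₁ = {1} ∪ Y ∪ Z, H₂ = {2} ∪ X ∪ Z, H₃ = {3} ∪ X ∪ Y, C₁ = {1,4} ∪ X, C₂ = {2,4} ∪ Y, C₃ = {3,4} ∪ Z, and let B_n be the collection of (n+3)-element subsets B of E_n such that {1,2,3} ⊄ B, and B ⊄ Cᵢ and B ⊄ Hᵢ for all i ∈ {1,2,3}. Then (E_n, B_n) satisfies the basis exchange axiom: for all A, B ∈ B_n and α ∈ A \ B, there exists β ∈ B \ A with (A \ {α}) ∪ {β} ∈ B_n; hence (E_n, B_n) is a matroid of rank n+3. -/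
/-!
Call `Hᵢ`, `Cᵢ` the six hyperplanes and `T = {1,2,3}` the circuit. Two distinct hyperplanes
meet in at most `n + 1` points and each misses two points of `T`, so for bases `A`, `B` and
`a ∈ A \ B` the `(n + 2)`-set `A - a` lies in at most one hyperplane `F`. If it does, any
`b ∈ B \ F` can be added. If not, the only forbidden `b` is the one completing `T`, and if that
is the only point of `B \ A`, then `A - a + b = B`.
-/

open Finset

/-- The ground set `E_n = {1,2,3,4} ∪ X ∪ Y ∪ Z`: the four special points are `Sum.inl 0, …,
Sum.inl 3` (standing for `1,2,3,4`), and `Sum.inr (k, j)` is the `j`-th element of `X`, `Y`, `Z`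
for `k = 0, 1, 2` respectively. -/
abbrev MIElt (n : ℕ) := Fin 4 ⊕ (Fin 3 × Fin (n + 1))

/-- `MIXYZ n 0 = X`, `MIXYZ n 1 = Y`, `MIXYZ n 2 = Z`. -/
def MIXYZ (n : ℕ) (k : Fin 3) : Finset (MIElt n) :=
  (Finset.univ : Finset (Fin (n + 1))).image fun j => Sum.inr (k, j)

/-- `H₁ = {1} ∪ Y ∪ Z`, `H₂ = {2} ∪ X ∪ Z`, `H₃ = {3} ∪ X ∪ Y` (indices shifted to `0,1,2`). -/
def MIH (n : ℕ) (i : Fin 3) : Finset (MIElt n) :=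
  insert (Sum.inl i.castSucc) (MIXYZ n (i + 1) ∪ MIXYZ n (i + 2))

/-- `C₁ = {1,4} ∪ X`, `C₂ = {2,4} ∪ Y`, `C₃ = {3,4} ∪ Z` (indices shifted to `0,1,2`). -/
def MIC (n : ℕ) (i : Fin 3) : Finset (MIElt n) :=
  insert (Sum.inl i.castSucc) (insert (Sum.inl 3) (MIXYZ n i))

/-- The set `{1,2,3}` of special points. -/
def MIT (n : ℕ) : Finset (MIElt n) := {Sum.inl 0, Sum.inl 1, Sum.inl 2}

/-- The collection `B_n` of bases of the matroid `MI_n`. -/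
def MIBases (n : ℕ) (B : Finset (MIElt n)) : Prop :=
  B.card = n + 3 ∧ ¬ MIT n ⊆ B ∧ ∀ i : Fin 3, ¬ B ⊆ MIC n i ∧ ¬ B ⊆ MIH n i

namespace Finset

variable {α : Type*} [DecidableEq α]

theorem eq_insert_erase_of_sdiff_subset_singleton {A B : Finset α} {a t : α} (hcard : #A = #B)
    (ha : a ∈ A \ B) (hBA : B \ A ⊆ {t}) : B = insert t (A.erase a) := by
  have hcomm : #(A \ B) = #(B \ A) := card_sdiff_comm hcard
  have hAB : A \ B = {a} := eq_singleton_iff_unique_mem.2 ⟨ha, fun x hx =>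
    card_le_one.1 (hcomm.trans_le (card_le_card hBA |>.trans (card_singleton t).le)) x hx a ha⟩
  have hBA' : B \ A = {t} := (subset_singleton_iff.1 hBA).resolve_left (by grind)
  simp only [Finset.ext_iff, mem_sdiff, mem_singleton] at hAB hBA'
  ext x
  grind

end Finset

section BaseAvoiding

variable {α ι : Type*}

def IsBaseAvoiding (r : ℕ) (T : Finset α) (H : ι → Finset α) (B : Finset α) : Prop :=
  #B = r ∧ ¬T ⊆ B ∧ ∀ i, ¬B ⊆ H i

variable [DecidableEq α] {r : ℕ} {T : Finset α} {H : ι → Finset α} {A B : Finset α} {a : α}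

theorem IsBaseAvoiding.card_insert_erase (hA : IsBaseAvoiding r T H A) (ha : a ∈ A) {b : α}
    (hb : b ∉ A) : #(insert b (A.erase a)) = r := by
  rw [card_insert_of_notMem (fun h => hb (mem_of_mem_erase h)), card_erase_add_one ha, hA.1]

theorem IsBaseAvoiding.exchange_of_erase_subset (hT : ∀ i, 2 ≤ #(T \ H i))
    (hH : Pairwise fun i j => #(H i ∩ H j) + 2 ≤ r) (hA : IsBaseAvoiding r T H A)
    (hB : IsBaseAvoiding r T H B) (ha : a ∈ A \ B) {i : ι} (hi : A.erase a ⊆ H i) :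
    ∃ b ∈ B \ A, IsBaseAvoiding r T H (insert b (A.erase a)) := by
  obtain ⟨haA, haB⟩ := mem_sdiff.1 ha
  obtain ⟨b, hbB, hbH⟩ := not_subset.1 (hB.2.2 i)
  have hbA : b ∉ A := fun hbA => hbH (hi (mem_erase.2 ⟨by rintro rfl; exact haB hbB, hbA⟩))
  refine ⟨b, mem_sdiff.2 ⟨hbB, hbA⟩, hA.card_insert_erase haA hbA, fun hTb => ?_, fun j hj => ?_⟩
  · have hTH : T \ H i ⊆ {b} := fun x hx => by
      rcases mem_insert.1 (hTb (mem_sdiff.1 hx).1) with rfl | hxD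
      · exact mem_singleton_self x
      · exact absurd (hi hxD) (mem_sdiff.1 hx).2
    have := (card_le_card hTH).trans (card_singleton b).le
    have := hT i
    omega
  · obtain rfl | hij := eq_or_ne j i
    · exact hbH (hj (mem_insert_self b _))
    · have hle := card_le_card (subset_inter hi ((subset_insert b _).trans hj))
      have := hH hij.symm
      rw [card_erase_of_mem haA, hA.1] at hle
      omega

theorem IsBaseAvoiding.exchange_of_forall_erase_not_subset (hA : IsBaseAvoiding r T H A)
    (hB : IsBaseAvoiding r T H B) (ha : a ∈ A \ B) (hD : ∀ i, ¬A.erase a ⊆ H i) :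
    ∃ b ∈ B \ A, IsBaseAvoiding r T H (insert b (A.erase a)) := by
  by_cases hgood : ∃ b ∈ B \ A, ¬T ⊆ insert b (A.erase a)
  · obtain ⟨b, hb, hTb⟩ := hgood
    exact ⟨b, hb, hA.card_insert_erase (mem_sdiff.1 ha).1 (mem_sdiff.1 hb).2, hTb,
      fun i hi => hD i ((subset_insert b _).trans hi)⟩
  push Not at hgood
  obtain ⟨t, htT, htA⟩ := not_subset.1 hA.2.1
  have hBA : B \ A ⊆ {t} := fun b hb => by
    rcases mem_insert.1 (hgood b hb htT) with rfl | ht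
    · exact mem_singleton_self t
    · exact absurd (mem_of_mem_erase ht) htA
  have hBeq := eq_insert_erase_of_sdiff_subset_singleton (hA.1.trans hB.1.symm) ha hBA
  exact ⟨t, mem_sdiff.2 ⟨hBeq ▸ mem_insert_self t _, htA⟩, hBeq ▸ hB⟩

theorem IsBaseAvoiding.exchange (hT : ∀ i, 2 ≤ #(T \ H i))
    (hH : Pairwise fun i j => #(H i ∩ H j) + 2 ≤ r) (hA : IsBaseAvoiding r T H A)
    (hB : IsBaseAvoiding r T H B) (ha : a ∈ A \ B) :
    ∃ b ∈ B \ A, IsBaseAvoiding r T H (insert b (A.erase a)) := by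
  by_cases hD : ∃ i, A.erase a ⊆ H i
  · obtain ⟨i, hi⟩ := hD
    exact hA.exchange_of_erase_subset hT hH hB ha hi
  · exact hA.exchange_of_forall_erase_not_subset hB ha (not_exists.1 hD)

end BaseAvoiding

theorem Matroid.exists_isBase_iff_of_finset_exchange {α : Type*} [DecidableEq α]
    (P : Finset α → Prop) (hne : ∃ B, P B)
    (hex : ∀ A B, P A → P B → ∀ a ∈ A \ B, ∃ b ∈ B \ A, P (insert b (A.erase a))) :
    ∃ M : Matroid α, ∀ S : Set α, M.IsBase S ↔ ∃ B : Finset α, P B ∧ ↑B = S := by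
  refine ⟨Matroid.ofExistsFiniteIsBase Set.univ (fun S => ∃ B : Finset α, P B ∧ ↑B = S)
    ?_ ?_ (fun _ _ => Set.subset_univ _), fun S => Iff.rfl⟩
  · obtain ⟨B, hB⟩ := hne
    exact ⟨B, ⟨B, hB, rfl⟩, B.finite_toSet⟩
  · rintro _ _ ⟨A, hA, rfl⟩ ⟨B, hB, rfl⟩ a ha
    rw [← coe_sdiff, mem_coe] at ha
    obtain ⟨b, hb, hAb⟩ := hex A B hA hB a ha
    exact ⟨b, by rwa [← coe_sdiff, mem_coe], _, hAb, by simp⟩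

section MI

variable {n : ℕ} {i j k : Fin 3} {s : Fin 4} {l : Fin (n + 1)}

@[simp] theorem inl_notMem_MIXYZ : Sum.inl s ∉ MIXYZ n k := by simp [MIXYZ]

@[simp] theorem inr_mem_MIXYZ : Sum.inr (j, l) ∈ MIXYZ n k ↔ j = k := by simp [MIXYZ, eq_comm]

theorem card_MIXYZ (k : Fin 3) : #(MIXYZ n k) = n + 1 := by
  rw [MIXYZ, card_image_of_injective _ (fun _ _ h => by simpa using h), card_univ,
    Fintype.card_fin]

@[simp] theorem inl_mem_MIH : Sum.inl s ∈ MIH n i ↔ s = i.castSucc := by simp [MIH]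

@[simp] theorem inr_mem_MIH : Sum.inr (k, l) ∈ MIH n i ↔ k ≠ i := by
  simp only [MIH, mem_insert, reduceCtorEq, mem_union, inr_mem_MIXYZ, false_or]
  revert i k; decide

@[simp] theorem inl_mem_MIC : Sum.inl s ∈ MIC n i ↔ s = i.castSucc ∨ s = 3 := by simp [MIC]

@[simp] theorem inr_mem_MIC : Sum.inr (k, l) ∈ MIC n i ↔ k = i := by simp [MIC]

@[simp] theorem inl_mem_MIT : Sum.inl s ∈ MIT n ↔ s ≠ 3 := by
  simp only [MIT, mem_insert, mem_singleton, Sum.inl.injEq]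
  revert s; decide

@[simp] theorem inr_notMem_MIT : Sum.inr (k, l) ∉ MIT n := by simp [MIT]

theorem card_MIT : #(MIT n) = 3 := rfl

theorem MIT_sdiff_MIH : MIT n \ MIH n i = (MIT n).erase (Sum.inl i.castSucc) := by
  ext (s | ⟨k, l⟩) <;> simp [and_comm]

theorem MIT_sdiff_MIC : MIT n \ MIC n i = (MIT n).erase (Sum.inl i.castSucc) := by
  ext (s | ⟨k, l⟩) <;> simp [and_comm]

-- `0 + 1 + 2 = 0` in `Fin 3`, so `-(i + j)` is the index different from `i` and `j`.
theorem MIH_inter_MIH_subset (hij : i ≠ j) : MIH n i ∩ MIH n j ⊆ MIXYZ n (-(i + j)) := by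
  rintro (s | ⟨k, l⟩) hx <;>
    simp only [mem_inter, inl_mem_MIH, inr_mem_MIH, inl_notMem_MIXYZ, inr_mem_MIXYZ] at hx ⊢
  · exact hij (Fin.castSucc_injective _ (hx.1.symm.trans hx.2))
  · revert i j k; decide

theorem MIC_inter_MIH_subset (hij : i ≠ j) : MIC n i ∩ MIH n j ⊆ MIXYZ n i := by
  rintro (s | ⟨k, l⟩) hx <;> simp only [mem_inter, inl_mem_MIC, inr_mem_MIC, inl_mem_MIH,
    inr_mem_MIH, inl_notMem_MIXYZ, inr_mem_MIXYZ] at hx ⊢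
  · revert i j s; decide
  · exact hx.1

theorem MIC_inter_MIH_self : MIC n i ∩ MIH n i ⊆ {Sum.inl i.castSucc} := by
  rintro (s | ⟨k, l⟩) hx <;> simp only [mem_inter, inl_mem_MIC, inr_mem_MIC, inl_mem_MIH,
    inr_mem_MIH, mem_singleton, Sum.inl.injEq, ne_eq, and_not_self] at hx ⊢
  exact hx.2

theorem MIC_inter_MIC_subset (hij : i ≠ j) : MIC n i ∩ MIC n j ⊆ {Sum.inl 3} := by
  rintro (s | ⟨k, l⟩) hx <;> simp only [mem_inter, inl_mem_MIC, inr_mem_MIC, mem_singleton,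
    Sum.inl.injEq, reduceCtorEq] at hx ⊢
  · revert i j s; decide
  · exact hij (hx.1.symm.trans hx.2)

def MIHyperplane (n : ℕ) : Fin 3 ⊕ Fin 3 → Finset (MIElt n) := Sum.elim (MIC n) (MIH n)

theorem MIBases_iff {B : Finset (MIElt n)} :
    MIBases n B ↔ IsBaseAvoiding (n + 3) (MIT n) (MIHyperplane n) B := by
  simp only [MIBases, IsBaseAvoiding, MIHyperplane, Sum.forall, Sum.elim_inl, Sum.elim_inr,
    forall_and]

theorem two_le_card_MIT_sdiff_MIHyperplane (p : Fin 3 ⊕ Fin 3) :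
    2 ≤ #(MIT n \ MIHyperplane n p) := by
  have h (i : Fin 3) : #((MIT n).erase (Sum.inl i.castSucc)) = 2 := by
    rw [card_erase_of_mem (by simpa using (Fin.castSucc_lt_last i).ne), card_MIT]
  rcases p with i | i
  · exact (h i).ge.trans_eq (congrArg card MIT_sdiff_MIC.symm)
  · exact (h i).ge.trans_eq (congrArg card MIT_sdiff_MIH.symm)

theorem card_MIHyperplane_inter_add_two_le :
    Pairwise fun p q => #(MIHyperplane n p ∩ MIHyperplane n q) + 2 ≤ n + 3 := by
  have hX {D : Finset (MIElt n)} {k} (h : D ⊆ MIXYZ n k) : #D + 2 ≤ n + 3 := by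
    have := card_le_card h
    rw [card_MIXYZ] at this
    omega
  have hS {D : Finset (MIElt n)} {x} (h : D ⊆ {x}) : #D + 2 ≤ n + 3 := by
    have := card_le_card h
    rw [card_singleton] at this
    omega
  have hCH (i j : Fin 3) : #(MIC n i ∩ MIH n j) + 2 ≤ n + 3 := by
    obtain rfl | hij := eq_or_ne i j
    · exact hS MIC_inter_MIH_self
    · exact hX (MIC_inter_MIH_subset hij)
  rintro (i | i) (j | j) hij <;>
    simp only [MIHyperplane, Sum.elim_inl, Sum.elim_inr, ne_eq, Sum.inl.injEq,
      Sum.inr.injEq] at hij ⊢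
  · exact hS (MIC_inter_MIC_subset hij)
  · exact hCH i j
  · exact inter_comm (MIH n i) _ ▸ hCH j i
  · exact hX (MIH_inter_MIH_subset hij)

theorem exists_MIBases (n : ℕ) : ∃ B, MIBases n B := by
  refine ⟨insert (Sum.inl 0) (insert (Sum.inl 1) (insert (Sum.inl 3)
    ((MIXYZ n 0).erase (Sum.inr (0, 0))))), ?_, fun h => by simpa using h (show Sum.inl 2 ∈ MIT n by simp), fun i => ⟨?_, ?_⟩⟩
  · rw [card_insert_of_notMem (by simp), card_insert_of_notMem (by simp),
      card_insert_of_notMem (by simp), card_erase_of_mem (by simp), card_MIXYZ]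
    omega
  · intro h
    have h0 := h (mem_insert_self _ _)
    have h1 := h (mem_insert_of_mem (mem_insert_self _ _))
    simp only [inl_mem_MIC] at h0 h1
    clear h
    revert i; decide
  · intro h
    have h3 := h (mem_insert_of_mem (mem_insert_of_mem (mem_insert_self _ _)))
    rw [inl_mem_MIH] at h3
    exact (Fin.castSucc_lt_last i).ne' h3

end MI

/-- `(E_n, B_n)` satisfies the basis-exchange axiom (and `B_n` is nonempty), hence it defines
a matroid whose bases are exactly the members of `B_n`; all bases have size `n + 3`, so the
matroid has rank `n + 3`. -/
theorem MI_is_matroid (n : ℕ) :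
    (∃ B, MIBases n B) ∧
    (∀ A B : Finset (MIElt n), MIBases n A → MIBases n B →
      ∀ a ∈ A \ B, ∃ b ∈ B \ A, MIBases n (insert b (A.erase a))) ∧
    ∃ M : Matroid (MIElt n),
      (∀ B : Finset (MIElt n), M.IsBase ↑B ↔ MIBases n B) ∧
      (∀ B : Set (MIElt n), M.IsBase B → B.ncard = n + 3) := by
  have hex : ∀ A B : Finset (MIElt n), MIBases n A → MIBases n B →
      ∀ a ∈ A \ B, ∃ b ∈ B \ A, MIBases n (insert b (A.erase a)) := by
    simp only [MIBases_iff]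
    exact fun A B hA hB a ha => hA.exchange two_le_card_MIT_sdiff_MIHyperplane
      card_MIHyperplane_inter_add_two_le hB ha
  obtain ⟨M, hM⟩ := Matroid.exists_isBase_iff_of_finset_exchange _ (exists_MIBases n) hex
  refine ⟨exists_MIBases n, hex, M, fun B => by simp [hM], fun S hS => ?_⟩
  obtain ⟨B, hB, rfl⟩ := (hM S).1 hS
  rw [Set.ncard_coe_finset, hB.1]
end

section
/- With the notation of the matroid MI_n = (E_n, B_n): every subset I ⊆ E_n with |I| = n+2 and {1,2,3} ⊄ I is an independent set of MI_n (i.e., I is contained in some member of B_n). -/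
open Finset

/-!
Call `C₁, C₂, C₃, H₁, H₂, H₃` the hyperplanes of `MI_n`. Any two of them meet in at most `n + 1`
points (`Cᵢ ∩ Cⱼ = {4}`, `Cᵢ ∩ Hᵢ = {i}`, `Cⱼ ∩ Hᵢ = X_j`, `Hᵢ ∩ Hⱼ` is the third of `X, Y, Z`), so
the `(n + 2)`-set `I` lies in at most one hyperplane `F`. Adding to `I` a point outside `F` (or
outside `I` if there is no such `F`) and outside `{1,2,3}` gives a basis; such a point exists
because `|F ∪ {1,2,3}| ≤ 2n + 6 < 3n + 7 = |E_n|`.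
-/

namespace MI

variable {n : ℕ}

@[simp]
lemma inr_mem_MIXYZ {k k' : Fin 3} {m : Fin (n + 1)} :
    Sum.inr (k', m) ∈ MIXYZ n k ↔ k' = k := by
  simp [MIXYZ, eq_comm]

@[simp]
lemma inl_notMem_MIXYZ {k : Fin 3} {a : Fin 4} : Sum.inl a ∉ MIXYZ n k := by
  simp [MIXYZ]

lemma card_MIXYZ (k : Fin 3) : (MIXYZ n k).card = n + 1 := by
  rw [MIXYZ, card_image_of_injective _ fun a b h => by simpa using h, card_univ, Fintype.card_fin]

@[simp]
lemma inl_mem_MIC {i : Fin 3} {a : Fin 4} : Sum.inl a ∈ MIC n i ↔ a = i.castSucc ∨ a = 3 := by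
  simp [MIC]

@[simp]
lemma inr_mem_MIC {i k : Fin 3} {m : Fin (n + 1)} : Sum.inr (k, m) ∈ MIC n i ↔ k = i := by
  simp [MIC]

@[simp]
lemma inl_mem_MIH {i : Fin 3} {a : Fin 4} : Sum.inl a ∈ MIH n i ↔ a = i.castSucc := by
  simp [MIH]

@[simp]
lemma inr_mem_MIH {i k : Fin 3} {m : Fin (n + 1)} : Sum.inr (k, m) ∈ MIH n i ↔ k ≠ i := by
  have : ∀ i k : Fin 3, (k = i + 1 ∨ k = i + 2) ↔ k ≠ i := by decide
  simp [MIH, this]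

lemma card_MIC_le (i : Fin 3) : (MIC n i).card ≤ n + 3 := by
  have := card_MIXYZ (n := n) i
  have := card_insert_le (Sum.inl 3) (MIXYZ n i)
  have := card_insert_le (Sum.inl i.castSucc) (insert (Sum.inl 3) (MIXYZ n i))
  rw [MIC]; omega

lemma card_MIH_le (i : Fin 3) : (MIH n i).card ≤ 2 * n + 3 := by
  have := card_MIXYZ (n := n) (i + 1)
  have := card_MIXYZ (n := n) (i + 2)
  have := card_union_le (MIXYZ n (i + 1)) (MIXYZ n (i + 2))
  have := card_insert_le (Sum.inl i.castSucc) (MIXYZ n (i + 1) ∪ MIXYZ n (i + 2))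
  rw [MIH]; omega

lemma card_MIC_inter_MIC {i j : Fin 3} (hij : i ≠ j) : (MIC n i ∩ MIC n j).card ≤ n + 1 := by
  have hsub : MIC n i ∩ MIC n j ⊆ {Sum.inl 3} := by
    rintro (a | ⟨k, m⟩) hx <;> simp only [mem_inter, inl_mem_MIC, inr_mem_MIC] at hx
    · rw [mem_singleton, Sum.inl.injEq]
      by_contra h3
      exact hij <| Fin.castSucc_injective _ <|
        (hx.1.resolve_right h3).symm.trans (hx.2.resolve_right h3)
    · exact absurd (hx.1.symm.trans hx.2) hij
  exact (card_le_card hsub).trans (by simp)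

lemma card_MIH_inter_MIH {i j : Fin 3} (hij : i ≠ j) : (MIH n i ∩ MIH n j).card ≤ n + 1 := by
  have hsub : MIH n i ∩ MIH n j ⊆ MIXYZ n (-(i + j)) := by
    have third : ∀ i j k : Fin 3, i ≠ j → k ≠ i → k ≠ j → k = -(i + j) := by decide
    rintro (a | ⟨k, m⟩) hx <;> simp only [mem_inter, inl_mem_MIH, inr_mem_MIH] at hx
    · exact absurd (Fin.castSucc_injective _ (hx.1.symm.trans hx.2)) hij
    · exact inr_mem_MIXYZ.2 (third i j k hij hx.1 hx.2)
  exact (card_le_card hsub).trans (card_MIXYZ _).le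

lemma card_MIC_inter_MIH (i j : Fin 3) : (MIC n i ∩ MIH n j).card ≤ n + 1 := by
  rcases eq_or_ne i j with rfl | hij
  · have hsub : MIC n i ∩ MIH n i ⊆ {Sum.inl i.castSucc} := by
      rintro (a | ⟨k, m⟩) hx <;> simp_all
    exact (card_le_card hsub).trans (by simp)
  · have hsub : MIC n i ∩ MIH n j ⊆ MIXYZ n i := by
      rintro (a | ⟨k, m⟩) hx <;> simp only [mem_inter, inl_mem_MIC, inr_mem_MIC, inl_mem_MIH,
        inr_mem_MIH] at hx
      · rcases hx with ⟨rfl | rfl, h⟩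
        · exact absurd (Fin.castSucc_injective _ h) hij
        · exact absurd h.symm (Fin.castSucc_lt_last j).ne
      · simp [hx.1]
    exact (card_le_card hsub).trans (card_MIXYZ _).le

/-- The sets `Cᵢ` and `Hᵢ`, which no basis of `MI_n` may lie in. -/
def IsMIHyperplane (n : ℕ) (F : Finset (MIElt n)) : Prop :=
  ∃ i : Fin 3, F = MIC n i ∨ F = MIH n i

lemma IsMIHyperplane.card_le {F : Finset (MIElt n)} (hF : IsMIHyperplane n F) :
    F.card ≤ 2 * n + 3 := by
  obtain ⟨i, rfl | rfl⟩ := hF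
  · have := card_MIC_le (n := n) i; omega
  · exact card_MIH_le i

lemma IsMIHyperplane.card_inter_le {F G : Finset (MIElt n)} (hF : IsMIHyperplane n F)
    (hG : IsMIHyperplane n G) (hFG : F ≠ G) : (F ∩ G).card ≤ n + 1 := by
  obtain ⟨i, rfl | rfl⟩ := hF <;> obtain ⟨j, rfl | rfl⟩ := hG
  · exact card_MIC_inter_MIC fun h => hFG (h ▸ rfl)
  · exact card_MIC_inter_MIH i j
  · exact inter_comm (MIH n i) _ ▸ card_MIC_inter_MIH j i
  · exact card_MIH_inter_MIH fun h => hFG (h ▸ rfl)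

lemma IsMIHyperplane.eq_of_subset {F G I : Finset (MIElt n)} (hF : IsMIHyperplane n F)
    (hG : IsMIHyperplane n G) (hIF : I ⊆ F) (hIG : I ⊆ G) (hI : n + 2 ≤ I.card) : F = G := by
  by_contra hFG
  have := card_le_card (subset_inter hIF hIG)
  have := hF.card_inter_le hG hFG
  omega

lemma exists_notMem_notMem_MIT {S : Finset (MIElt n)} (hS : S.card ≤ 2 * n + 3) :
    ∃ e, e ∉ S ∧ e ∉ MIT n := by
  have hT : (MIT n).card ≤ 3 := card_le_three
  have hE : (univ : Finset (MIElt n)).card = 3 * n + 7 := by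
    simp only [card_univ, Fintype.card_sum, Fintype.card_prod, Fintype.card_fin]; ring
  have hlt : (S ∪ MIT n).card < (univ : Finset (MIElt n)).card := by
    have := card_union_le S (MIT n); omega
  obtain ⟨e, -, he⟩ := exists_mem_notMem_of_card_lt_card hlt
  exact ⟨e, fun h => he (mem_union_left _ h), fun h => he (mem_union_right _ h)⟩

lemma exists_extension {I : Finset (MIElt n)} (hcard : I.card = n + 2) :
    ∃ e, e ∉ I ∧ e ∉ MIT n ∧ ∀ F, IsMIHyperplane n F → I ⊆ F → e ∉ F := by
  by_cases h : ∃ F, IsMIHyperplane n F ∧ I ⊆ F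
  · obtain ⟨F, hF, hIF⟩ := h
    obtain ⟨e, heF, heT⟩ := exists_notMem_notMem_MIT hF.card_le
    refine ⟨e, fun he => heF (hIF he), heT, fun G hG hIG => ?_⟩
    rwa [← hF.eq_of_subset hG hIF hIG hcard.ge]
  · push Not at h
    obtain ⟨e, heI, heT⟩ := exists_notMem_notMem_MIT (S := I) (by omega)
    exact ⟨e, heI, heT, fun F hF hIF => absurd hIF (h F hF)⟩

lemma MIBases_insert {I : Finset (MIElt n)} {e : MIElt n} (hcard : I.card = n + 2)
    (hT : ¬ MIT n ⊆ I) (heI : e ∉ I) (heT : e ∉ MIT n)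
    (hhyp : ∀ F, IsMIHyperplane n F → I ⊆ F → e ∉ F) : MIBases n (insert e I) := by
  refine ⟨by rw [card_insert_of_notMem heI, hcard], by rwa [subset_insert_iff_of_notMem heT],
    fun i => ⟨fun h => ?_, fun h => ?_⟩⟩
  · exact hhyp _ ⟨i, .inl rfl⟩ (insert_subset_iff.1 h).2 (insert_subset_iff.1 h).1
  · exact hhyp _ ⟨i, .inr rfl⟩ (insert_subset_iff.1 h).2 (insert_subset_iff.1 h).1

end MI

open MI in
/-- Every subset `I` of `E_n` with `|I| = n + 2` not containing `{1,2,3}` is independent in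
`MI_n`, i.e. contained in some basis. -/
theorem MI_small_sets_independent (n : ℕ) (I : Finset (MIElt n))
    (hcard : I.card = n + 2) (hT : ¬ MIT n ⊆ I) :
    ∃ B, MIBases n B ∧ I ⊆ B := by
  obtain ⟨e, heI, heT, hhyp⟩ := exists_extension hcard
  exact ⟨insert e I, MIBases_insert hcard hT heI heT hhyp, subset_insert e I⟩
end
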